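/- arXiv:2601.06383 — 2 statements merged into one kernel-verified Lean document; each statement's English description precedes it below -/
import Mathlib

section
/- Let c > 0 and let α : ℝ → ℝ be twice continuously differentiable. Then the map G : ℝ² → ℝ² is continuously differentiable on all of ℝ². -/
noncomputable section

/-- `φ(u) = (1 - u²)⁴` for `|u| ≤ 1` and `φ(u) = 0` for `|u| > 1`. -/
def phi (u : ℝ) : ℝ := if |u| ≤ 1 then (1 - u^2)^4 else 0

/-- The sign function: `1` for positive, `-1` for negative, `0` at `0`. -/
def sgn (u : ℝ) : ℝ := if 0 < u then 1 else if u < 0 then -1 else 0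

/-- The plane with the Euclidean norm. -/
abbrev E2 := EuclideanSpace ℝ (Fin 2)

/-- The vector `(a, b)` of `ℝ²`. -/
def vec2 (a b : ℝ) : E2 := (WithLp.equiv 2 (Fin 2 → ℝ)).symm ![a, b]

/-- `φ̃(x) = φ((x₁ - x₂)/(√2 c)) · α((x₁ + x₂)/2)`. -/
def phiT (c : ℝ) (α : ℝ → ℝ) (x : E2) : ℝ :=
  phi ((x 0 - x 1) / (Real.sqrt 2 * c)) * α ((x 0 + x 1) / 2)

/-- `G(x) = x + (1/√2)(x₁ - x₂)² sgn(x₁ - x₂) φ̃(x) · (1, -1)`. -/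
def Gmap (c : ℝ) (α : ℝ → ℝ) (x : E2) : E2 :=
  x + ((1 / Real.sqrt 2) * (x 0 - x 1)^2 * sgn (x 0 - x 1) * phiT c α x) • vec2 1 (-1)

def gp (x : ℝ) : ℝ := (max x 0)^2

lemma gp_hasDerivAt (x : ℝ) : HasDerivAt gp (2 * max x 0) x := by
  rcases lt_trichotomy x 0 with h | h | h
  · have heq : gp =ᶠ[nhds x] fun _ => (0:ℝ) := by
      filter_upwards [Iio_mem_nhds h] with y hy
      simp [gp, max_eq_right (le_of_lt (Set.mem_Iio.mp hy))]
    have := (hasDerivAt_const x (0:ℝ)).congr_of_eventuallyEq heq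
    simpa [max_eq_right h.le] using this
  · subst h
    rw [hasDerivAt_iff_isLittleO]
    simp only [gp, sub_zero, smul_zero, max_self, ne_eq, OfNat.ofNat_ne_zero,
      not_false_eq_true, zero_pow, sub_zero, mul_zero, smul_zero]
    rw [Asymptotics.isLittleO_iff]
    intro ε hε
    filter_upwards [Metric.ball_mem_nhds (0:ℝ) hε] with y hy
    rw [Metric.mem_ball, Real.dist_eq, sub_zero] at hy
    have h1 : |max y 0| ≤ |y| := by
      rcases le_total y 0 with h' | h' <;> simp [max_eq_right, max_eq_left, h', abs_of_nonneg]
    calc ‖(max y 0)^2‖ = |max y 0| * |max y 0| := by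
          rw [Real.norm_eq_abs, sq, abs_mul]
      _ ≤ ε * |y| := by
          apply mul_le_mul (le_of_lt (lt_of_le_of_lt h1 hy)) h1 (abs_nonneg _)
            (le_of_lt hε)
      _ = ε * ‖y‖ := by rw [Real.norm_eq_abs]
  · have heq : gp =ᶠ[nhds x] fun y => y^2 := by
      filter_upwards [Ioi_mem_nhds h] with y hy
      simp [gp, max_eq_left (le_of_lt (Set.mem_Ioi.mp hy))]
    have := ((hasDerivAt_pow 2 x)).congr_of_eventuallyEq heq
    simpa [max_eq_left h.le, mul_comm] using this

lemma gp_contDiff : ContDiff ℝ 1 gp := by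
  rw [contDiff_one_iff_deriv]
  constructor
  · exact fun x => (gp_hasDerivAt x).differentiableAt
  · have : deriv gp = fun x => 2 * max x 0 := funext fun x => (gp_hasDerivAt x).deriv
    rw [this]
    exact continuous_const.mul (continuous_id.max continuous_const)

lemma sq_sgn_eq (u : ℝ) : u^2 * sgn u = gp u - gp (-u) := by
  unfold gp sgn
  rcases lt_trichotomy u 0 with h | h | h
  · rw [if_neg (by linarith), if_pos h, max_eq_right h.le, max_eq_left (by linarith)]
    ring
  · simp [h]
  · rw [if_pos h, max_eq_left h.le, max_eq_right (by linarith)]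
    ring

lemma phi_eq (v : ℝ) : phi v = (gp (1 - v^2))^2 := by
  unfold phi gp
  rcases le_or_gt |v| 1 with h | h
  · have h1 : (0:ℝ) ≤ 1 - v^2 := by nlinarith [abs_nonneg v, sq_abs v]
    rw [if_pos h, max_eq_left h1]
    ring
  · have h1 : 1 - v^2 ≤ 0 := by nlinarith [sq_abs v, abs_nonneg v]
    rw [if_neg (not_le.mpr h), max_eq_right h1]
    norm_num

/-- For `c > 0` and `α` twice continuously differentiable, `G` is continuously
differentiable on all of `ℝ²`. -/
theorem stmt_6 (c : ℝ) (hc : 0 < c) (α : ℝ → ℝ) (hα : ContDiff ℝ 2 α) :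
    ContDiff ℝ 1 (Gmap c α) := by
  have hEq : Gmap c α = fun x : E2 => x +
      ((1 / Real.sqrt 2) * ((gp (x 0 - x 1) - gp (-(x 0 - x 1))) *
        ((gp (1 - ((x 0 - x 1) / (Real.sqrt 2 * c))^2))^2 * α ((x 0 + x 1) / 2)))) •
        vec2 1 (-1) := by
    funext x
    unfold Gmap phiT
    congr 2
    rw [phi_eq]
    have h1 := sq_sgn_eq (x 0 - x 1)
    linear_combination (1 / Real.sqrt 2) * (gp (1 - ((x 0 - x 1) / (Real.sqrt 2 * c))^2))^2 *
      α ((x 0 + x 1) / 2) * h1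
  rw [hEq]
  have h0 : ContDiff ℝ 1 (fun x : E2 => x 0) := by
    have := (EuclideanSpace.proj (0 : Fin 2) : E2 →L[ℝ] ℝ).contDiff (n := 1); exact this
  have h1 : ContDiff ℝ 1 (fun x : E2 => x 1) := by
    have := (EuclideanSpace.proj (1 : Fin 2) : E2 →L[ℝ] ℝ).contDiff (n := 1); exact this
  have hu : ContDiff ℝ 1 (fun x : E2 => x 0 - x 1) := h0.sub h1
  have hs : ContDiff ℝ 1 (fun x : E2 => (x 0 + x 1) / 2) := (h0.add h1).div_const 2
  have hα1 : ContDiff ℝ 1 α := hα.of_le (by norm_num)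
  have hq : ContDiff ℝ 1 (fun x : E2 => 1 - ((x 0 - x 1) / (Real.sqrt 2 * c))^2) :=
    contDiff_const.sub ((hu.div_const _).pow 2)
  exact contDiff_id.add
    ((contDiff_const.mul
      (((gp_contDiff.comp hu).sub (gp_contDiff.comp hu.neg)).mul
        (((gp_contDiff.comp hq).pow 2).mul
          (hα1.comp hs)))).smul contDiff_const)
end
end

section
/- (Hadamard's global inverse function theorem.) Let n ≥ 1 and let F : ℝⁿ → ℝⁿ be continuously differentiable such that the derivative DF(x) is an invertible linear map (equivalently, its determinant is nonzero) at every point x ∈ ℝⁿ, and such that ‖F(x)‖ → ∞ as ‖x‖ → ∞. Then F is a C¹-diffeomorphism of ℝⁿ: F is bijective and its inverse is continuously differentiable. -/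
set_option linter.unusedSectionVars false
noncomputable section
open Set Filter Metric Topology

variable {E : Type*} [NormedAddCommGroup E] [NormedSpace ℝ E] [ProperSpace E]

def HadCharts (F : E → E) : Prop :=
  ∀ x : E, ∃ e : OpenPartialHomeomorph E E, x ∈ e.source ∧ (e : E → E) = F

variable {F : E → E}

theorem HadCharts.continuous (hc : HadCharts F) : Continuous F := by
  rw [continuous_iff_continuousAt]
  intro x
  obtain ⟨e, hx, he⟩ := hc x
  have : ContinuousAt (e : E → E) x := e.continuousAt hx
  rwa [he] at this

theorem HadCharts.ec (hc : HadCharts F)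
    (hprop : ∀ s : Set E, Bornology.IsBounded s → Bornology.IsBounded (F ⁻¹' s)) (y : E) :
    ∃ V : Set E, IsOpen V ∧ y ∈ V ∧
      ∀ x, F x ∈ V → ∃ e : OpenPartialHomeomorph E E, x ∈ e.source ∧ (e : E → E) = F ∧
        V ⊆ e.target := by
  classical
  have hcont := hc.continuous
  -- the compact set K
  have hK : IsCompact (F ⁻¹' closedBall y 1) :=
    Metric.isCompact_of_isClosed_isBounded
      ((isClosed_closedBall.preimage hcont)) (hprop _ isBounded_closedBall)
  set K := F ⁻¹' closedBall y 1 with hKdef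
  -- the fiber
  have hfibK : F ⁻¹' {y} ⊆ K := by
    intro x hx
    simp only [mem_preimage, mem_singleton_iff] at hx
    simp [hKdef, mem_preimage, hx]
  have hfib : IsCompact (F ⁻¹' {y}) :=
    hK.of_isClosed_subset ((isClosed_singleton.preimage hcont)) hfibK
  -- choose charts
  choose ch hch1 hch2 using hc
  -- finite subcover of the fiber, indexed by points of the fiber
  obtain ⟨t, ht⟩ := hfib.elim_finite_subcover
    (fun p : F ⁻¹' {y} => (ch (p : E)).source)
    (fun p => (ch (p : E)).open_source)
    (fun p hp => mem_iUnion.2 ⟨⟨p, hp⟩, hch1 p⟩)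
  set U : Set E := ⋃ p ∈ t, (ch (p : E)).source with hUdef
  have hUopen : IsOpen U := isOpen_biUnion fun p _ => (ch (p : E)).open_source
  have hfibU : F ⁻¹' {y} ⊆ U := ht
  -- main claim : points mapping near y are in U
  have main : ∃ r > 0, ∀ x, F x ∈ ball y r → x ∈ U := by
    by_contra h
    push_neg at h
    have hseq : ∀ m : ℕ, ∃ x, F x ∈ ball y (1 / (m + 1)) ∧ x ∉ U := by
      intro m
      obtain ⟨x, hx1, hx2⟩ := h (1 / (m + 1)) (by positivity)
      exact ⟨x, hx1, hx2⟩
    choose x hx1 hx2 using hseq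
    have hxK : ∀ m, x m ∈ K := by
      intro m
      have := hx1 m
      rw [mem_ball] at this
      have h1 : (1 : ℝ) / (m + 1) ≤ 1 := by
        rw [div_le_one (by positivity)]
        linarith [Nat.cast_nonneg (α := ℝ) m]
      simp only [hKdef, mem_preimage, mem_closedBall]
      linarith
    obtain ⟨a, haK, φ, hφ, hconv⟩ := hK.tendsto_subseq hxK
    have hFx : Tendsto (fun m => F (x m)) atTop (𝓝 y) := by
      rw [tendsto_iff_dist_tendsto_zero]
      apply squeeze_zero (fun m => dist_nonneg)
        (fun m => le_of_lt ((mem_ball.1 (hx1 m))))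
      exact tendsto_one_div_add_atTop_nhds_zero_nat
    have hFxφ : Tendsto (fun m => F (x (φ m))) atTop (𝓝 y) := hFx.comp hφ.tendsto_atTop
    have hFa : Tendsto (fun m => F (x (φ m))) atTop (𝓝 (F a)) :=
      (hcont.tendsto a).comp hconv
    have hay : F a = y := tendsto_nhds_unique hFa hFxφ
    have haU : a ∈ U := hfibU (by simp [hay])
    have : ∀ᶠ m in atTop, x (φ m) ∈ U :=
      hconv.eventually (hUopen.mem_nhds haU)
    obtain ⟨m, hm⟩ := this.exists
    exact hx2 (φ m) hm
  obtain ⟨r, hr, hrU⟩ := main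
  -- targets : y belongs to each target for p in the fiber
  have hytarget : ∀ p : F ⁻¹' {y}, y ∈ (ch (p : E)).target := by
    intro p
    have h1 : (ch (p : E)) (p : E) = F (p : E) := by rw [hch2]
    have h2 : F (p : E) = y := p.2
    have := (ch (p : E)).map_source (hch1 (p : E))
    rwa [h1, h2] at this
  set W : Set E := ⋂ p ∈ t, (ch (p : E)).target with hWdef
  have hWopen : IsOpen W := isOpen_biInter_finset fun p _ => (ch (p : E)).open_target
  have hyW : y ∈ W := mem_biInter fun p _ => hytarget p
  refine ⟨ball y r ∩ W, isOpen_ball.inter hWopen, ⟨mem_ball_self hr, hyW⟩, ?_⟩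
  intro x hx
  have hxU : x ∈ U := hrU x hx.1
  rw [hUdef, mem_iUnion₂] at hxU
  obtain ⟨p, hpt, hpx⟩ := hxU
  refine ⟨ch (p : E), hpx, hch2 (p : E), ?_⟩
  intro z hz
  have := hz.2
  rw [hWdef, mem_iInter₂] at this
  exact this p hpt

theorem HadCharts.unique (hc : HadCharts F) {s : Set ℝ} (hs : IsPreconnected s)
    {g₁ g₂ : ℝ → E} (h₁ : ContinuousOn g₁ s) (h₂ : ContinuousOn g₂ s)
    (hFg : ∀ t ∈ s, F (g₁ t) = F (g₂ t)) {t₀ : ℝ} (ht₀ : t₀ ∈ s) (h0 : g₁ t₀ = g₂ t₀) :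
    EqOn g₁ g₂ s := by
  haveI : PreconnectedSpace s := Subtype.preconnectedSpace hs
  have hr₁ : Continuous (s.restrict g₁) := continuousOn_iff_continuous_restrict.1 h₁
  have hr₂ : Continuous (s.restrict g₂) := continuousOn_iff_continuous_restrict.1 h₂
  set A : Set s := {u : s | g₁ u = g₂ u} with hA
  have hclosed : IsClosed A := isClosed_eq hr₁ hr₂
  have hopen : IsOpen A := by
    rw [isOpen_iff_mem_nhds]
    intro u hu
    obtain ⟨e, hue, hecoe⟩ := hc (g₁ u)
    have hue₂ : g₂ (u : ℝ) ∈ e.source := by rwa [← hu]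
    have hev₁ : s.restrict g₁ ⁻¹' e.source ∈ 𝓝 u :=
      hr₁.continuousAt.preimage_mem_nhds (e.open_source.mem_nhds hue)
    have hev₂ : s.restrict g₂ ⁻¹' e.source ∈ 𝓝 u :=
      hr₂.continuousAt.preimage_mem_nhds (e.open_source.mem_nhds hue₂)
    filter_upwards [hev₁, hev₂] with v hv₁ hv₂
    have : e (g₁ v) = e (g₂ v) := by
      rw [hecoe]
      exact hFg v v.2
    exact e.injOn hv₁ hv₂ this
  have hne : (⟨t₀, ht₀⟩ : s) ∈ A := h0
  have : A = univ := (IsClopen.eq_univ ⟨hclosed, hopen⟩ ⟨_, hne⟩)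
  intro t ht
  have : (⟨t, ht⟩ : s) ∈ A := this ▸ mem_univ _
  exact this


theorem HadCharts.lift (hc : HadCharts F)
    (hprop : ∀ s : Set E, Bornology.IsBounded s → Bornology.IsBounded (F ⁻¹' s))
    {γ : ℝ → E} (hγ : Continuous γ) {x₀ : E} (h0 : F x₀ = γ 0) :
    ∃ g : ℝ → E, ContinuousOn g (Icc 0 1) ∧ g 0 = x₀ ∧ ∀ t ∈ Icc 0 1, F (g t) = γ t := by
  classical
  choose V hVopen hVmem hVchart using hc.ec hprop
  obtain ⟨δ, hδ, hLeb⟩ := lebesgue_number_lemma_of_metric (isCompact_Icc (a := (0:ℝ)) (b := 1))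
    (fun y : E => hγ.isOpen_preimage _ (hVopen y))
    (fun t _ => mem_iUnion.2 ⟨γ t, hVmem (γ t)⟩)
  obtain ⟨N, hN⟩ := exists_nat_gt (1 / δ)
  have hNR : (0:ℝ) < N := lt_of_le_of_lt (by positivity) hN
  have hstep : 1 / (N : ℝ) < δ := by
    rw [div_lt_iff₀ hNR, mul_comm, ← div_lt_iff₀ hδ]
    exact hN
  set c : ℕ → ℝ := fun i => (i : ℝ) / N with hcdef
  have hc0 : c 0 = 0 := by simp [hcdef]
  have hcN : c N = 1 := div_self hNR.ne'
  have hcnonneg : ∀ i, 0 ≤ c i := fun i => by positivity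
  have hcmono : ∀ i, c i ≤ c (i + 1) := by
    intro i
    have h1 : (i : ℝ) ≤ ((i + 1 : ℕ) : ℝ) := by exact_mod_cast Nat.le_succ i
    simp only [hcdef]
    apply div_le_div_of_nonneg_right h1 hNR.le |>.trans_eq rfl
  have hcdiff : ∀ i, c (i + 1) - c i = 1 / N := by
    intro i
    rw [hcdef]
    push_cast
    ring
  have hcle1 : ∀ i, i ≤ N → c i ≤ 1 := by
    intro i hi
    rw [hcdef, div_le_one hNR]
    exact_mod_cast hi
  have key : ∀ i, i ≤ N → ∃ g : ℝ → E, ContinuousOn g (Icc 0 (c i)) ∧ g 0 = x₀ ∧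
      ∀ t ∈ Icc 0 (c i), F (g t) = γ t := by
    intro i
    induction i with
    | zero =>
      intro _
      refine ⟨fun _ => x₀, continuousOn_const, rfl, ?_⟩
      intro t ht
      rw [hc0] at ht
      have : t = 0 := le_antisymm ht.2 ht.1
      rw [this, h0]
    | succ i ih =>
      intro hiN
      obtain ⟨g, hgcont, hg0, hgF⟩ := ih (Nat.le_of_succ_le hiN)
      have hciIcc : c i ∈ Icc (0:ℝ) 1 := ⟨hcnonneg i, hcle1 i (Nat.le_of_succ_le hiN)⟩
      obtain ⟨y, hball⟩ := hLeb (c i) hciIcc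
      have hsegV : ∀ t ∈ Icc (c i) (c (i+1)), γ t ∈ V y := by
        intro t ht
        apply hball
        rw [mem_ball, Real.dist_eq, abs_of_nonneg (by linarith [ht.1])]
        have := hcdiff i
        have h2 := ht.2
        linarith
      have hgci : F (g (c i)) ∈ V y := by
        rw [hgF (c i) ⟨hcnonneg i, le_rfl⟩]
        exact hsegV (c i) ⟨le_rfl, hcmono i⟩
      obtain ⟨e, hsrc, hcoe, htar⟩ := hVchart y (g (c i)) hgci
      have hjunction : e.symm (γ (c i)) = g (c i) := by
        have h1 : e (g (c i)) = γ (c i) := by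
          rw [hcoe]
          exact hgF (c i) ⟨hcnonneg i, le_rfl⟩
        rw [← h1, e.left_inv hsrc]
      set g' : ℝ → E := fun t => if t ≤ c i then g t else e.symm (γ t) with hg'def
      have h1 : ContinuousOn g' (Icc 0 (c i)) :=
        hgcont.congr fun t ht => if_pos ht.2
      have h2 : ContinuousOn g' (Icc (c i) (c (i+1))) := by
        have hcont2 : ContinuousOn (fun t => e.symm (γ t)) (Icc (c i) (c (i+1))) :=
          e.continuousOn_symm.comp hγ.continuousOn fun t ht => htar (hsegV t ht)
        apply hcont2.congr
        intro t ht
        by_cases h : t ≤ c i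
        · have : t = c i := le_antisymm h ht.1
          rw [hg'def]
          simp only [if_pos h]
          rw [this, hjunction]
        · rw [hg'def]
          simp only [if_neg h]
      have hcont' : ContinuousOn g' (Icc 0 (c (i+1))) := by
        have hU : Icc (0:ℝ) (c (i+1)) = Icc 0 (c i) ∪ Icc (c i) (c (i+1)) :=
          (Icc_union_Icc_eq_Icc (hcnonneg i) (hcmono i)).symm
        rw [hU]
        intro t ht
        have hA : ContinuousWithinAt g' (Icc 0 (c i)) t := by
          by_cases htA : t ∈ Icc (0:ℝ) (c i)
          · exact h1 t htA
          · exact continuousWithinAt_of_notMem_closure (by rwa [isClosed_Icc.closure_eq])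
        have hB : ContinuousWithinAt g' (Icc (c i) (c (i+1))) t := by
          by_cases htB : t ∈ Icc (c i) (c (i+1))
          · exact h2 t htB
          · exact continuousWithinAt_of_notMem_closure (by rwa [isClosed_Icc.closure_eq])
        exact hA.union hB
      refine ⟨g', hcont', ?_, ?_⟩
      · rw [hg'def]
        simp only [if_pos (hcnonneg i)]
        exact hg0
      · intro t ht
        by_cases h : t ≤ c i
        · rw [hg'def]
          simp only [if_pos h]
          exact hgF t ⟨ht.1, h⟩
        · rw [hg'def]
          simp only [if_neg h]
          have htseg : t ∈ Icc (c i) (c (i+1)) := ⟨(not_le.1 h).le, ht.2⟩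
          have hγt : γ t ∈ e.target := htar (hsegV t htseg)
          calc F (e.symm (γ t)) = e (e.symm (γ t)) := by rw [hcoe]
            _ = γ t := e.right_inv hγt
  obtain ⟨g, hgc, hg0, hgF⟩ := key N le_rfl
  rw [hcN] at hgc hgF
  exact ⟨g, hgc, hg0, hgF⟩

theorem HadCharts.injective (hc : HadCharts F)
    (hprop : ∀ s : Set E, Bornology.IsBounded s → Bornology.IsBounded (F ⁻¹' s)) :
    Function.Injective F := by
  classical
  intro a b hab
  haveI : PreconnectedSpace E :=
    ⟨by simpa using (convex_univ : Convex ℝ (univ : Set E)).isPreconnected⟩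
  set γ : E → ℝ → E := fun x t => F x + t • (F b - F x) with hγdef
  have hγ0 : ∀ x, γ x 0 = F x := fun x => by simp [hγdef]
  have hγ1 : ∀ x, γ x 1 = F b := fun x => by simp [hγdef]
  have hγcont : ∀ x, Continuous (γ x) := fun x =>
    continuous_const.add (continuous_id.smul continuous_const)
  have hγcontx : ∀ t : ℝ, Continuous fun x => γ x t := fun t =>
    hc.continuous.add ((continuous_const.sub hc.continuous).const_smul t)
  have hLx : ∀ x, ∃ g : ℝ → E, ContinuousOn g (Icc 0 1) ∧ g 0 = x ∧
      ∀ t ∈ Icc 0 1, F (g t) = γ x t := fun x => hc.lift hprop (hγcont x) (hγ0 x).symm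
  choose L hLc hL0 hLF using hLx
  set φ : E → E := fun x => L x 1 with hφdef
  -- the endpoint of the lift of a constant path is the starting point
  have hφ_fixed : ∀ x, F x = F b → φ x = x := by
    intro x hx
    have hγconst : ∀ t : ℝ, γ x t = F x := by
      intro t
      rw [hγdef]
      simp [← hx]
    have := hc.unique isPreconnected_Icc (hLc x) continuousOn_const
      (fun t ht => by rw [hLF x t ht, hγconst t]) (left_mem_Icc.2 zero_le_one) (hL0 x)
    exact this (right_mem_Icc.2 zero_le_one)
  -- local constancy of φ
  have hLC : ∀ xbar : E, ∀ᶠ x in 𝓝 xbar, φ x = φ xbar := by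
    intro xbar
    set g : ℝ → E := L xbar with hgdef
    choose V hVopen hVmem hVchart using hc.ec hprop
    obtain ⟨δ, hδ, hLeb⟩ := lebesgue_number_lemma_of_metric
      (isCompact_Icc (a := (0:ℝ)) (b := 1))
      (fun y : E => (hγcont xbar).isOpen_preimage _ (hVopen y))
      (fun t _ => mem_iUnion.2 ⟨γ xbar t, hVmem (γ xbar t)⟩)
    obtain ⟨N, hN⟩ := exists_nat_gt (1 / δ)
    have hNR : (0:ℝ) < N := lt_of_le_of_lt (by positivity) hN
    have hNpos : 0 < N := by exact_mod_cast hNR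
    have hstep : 1 / (N : ℝ) < δ := by
      rw [div_lt_iff₀ hNR, mul_comm, ← div_lt_iff₀ hδ]
      exact hN
    set c : ℕ → ℝ := fun i => (i : ℝ) / N with hcdef
    have hc0 : c 0 = 0 := by simp [hcdef]
    have hcN : c N = 1 := div_self hNR.ne'
    have hcnonneg : ∀ i, 0 ≤ c i := fun i => by positivity
    have hcmono : ∀ i, c i ≤ c (i + 1) := by
      intro i
      have h1 : (i : ℝ) ≤ ((i + 1 : ℕ) : ℝ) := by exact_mod_cast Nat.le_succ i
      simp only [hcdef]
      exact div_le_div_of_nonneg_right h1 hNR.le |>.trans_eq rfl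
    have hcdiff : ∀ i, c (i + 1) - c i = 1 / N := by
      intro i
      rw [hcdef]
      push_cast
      ring
    have hcle1 : ∀ i, i ≤ N → c i ≤ 1 := by
      intro i hi
      rw [hcdef, div_le_one hNR]
      exact_mod_cast hi
    have hsegIcc : ∀ i, i < N → Icc (c i) (c (i+1)) ⊆ Icc (0:ℝ) 1 := by
      intro i hi t ht
      exact ⟨le_trans (hcnonneg i) ht.1, le_trans ht.2 (hcle1 (i+1) hi)⟩
    -- choose the Lebesgue covering data per segment
    have hY : ∀ i : ℕ, ∃ y : E, i < N → ∀ t ∈ Icc (c i) (c (i+1)), γ xbar t ∈ V y := by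
      intro i
      by_cases h : i < N
      · obtain ⟨y, hy⟩ := hLeb (c i) ⟨hcnonneg i, hcle1 i h.le⟩
        refine ⟨y, fun _ => fun t ht => hy ?_⟩
        rw [mem_ball, Real.dist_eq, abs_of_nonneg (by linarith [ht.1])]
        have := hcdiff i
        have h2 := ht.2
        linarith
      · exact ⟨F b, fun h' => absurd h' h⟩
    choose Y hsegV using hY
    -- thickening radii
    have hEps : ∀ i : ℕ, ∃ ε : ℝ, 0 < ε ∧
        (i < N → ∀ z, (∃ t ∈ Icc (c i) (c (i+1)), dist z (γ xbar t) < ε) → z ∈ V (Y i)) := by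
      intro i
      by_cases h : i < N
      · have hScomp : IsCompact (γ xbar '' Icc (c i) (c (i+1))) :=
          (isCompact_Icc).image (hγcont xbar)
        have hSsub : γ xbar '' Icc (c i) (c (i+1)) ⊆ V (Y i) := by
          rintro - ⟨t, ht, rfl⟩
          exact hsegV i h t ht
        obtain ⟨ε, hε, hεsub⟩ := hScomp.exists_thickening_subset_open (hVopen (Y i)) hSsub
        refine ⟨ε, hε, fun _ z hz => hεsub ?_⟩
        obtain ⟨t, ht, hd⟩ := hz
        rw [Metric.mem_thickening_iff]
        exact ⟨γ xbar t, mem_image_of_mem _ ht, hd⟩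
      · exact ⟨1, one_pos, fun h' => absurd h' h⟩
    choose ε hεpos hεsub using hEps
    set εm : ℝ := (Finset.range N).inf' ⟨0, Finset.mem_range.2 hNpos⟩ ε with hεm
    have hεmpos : 0 < εm :=
      (Finset.lt_inf'_iff ⟨0, Finset.mem_range.2 hNpos⟩).2 fun i _ => hεpos i
    have hεmle : ∀ i, i < N → εm ≤ ε i := fun i hi =>
      Finset.inf'_le _ (Finset.mem_range.2 hi)
    -- for x close to xbar, the path γ x stays in the same covering sets
    have hγclose : ∀ x : E, dist (F x) (F xbar) < εm →
        ∀ i, i < N → ∀ t ∈ Icc (c i) (c (i+1)), γ x t ∈ V (Y i) := by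
      intro x hx i hi t ht
      have htIcc : t ∈ Icc (0:ℝ) 1 := hsegIcc i hi ht
      have hdist : dist (γ x t) (γ xbar t) ≤ dist (F x) (F xbar) := by
        rw [dist_eq_norm, dist_eq_norm]
        have heq : γ x t - γ xbar t = (1 - t) • (F x - F xbar) := by
          simp only [hγdef]
          module
        rw [heq, norm_smul]
        have h1 : ‖(1:ℝ) - t‖ ≤ 1 := by
          rw [Real.norm_eq_abs, abs_le]
          constructor <;> [linarith [htIcc.2]; linarith [htIcc.1]]
        calc ‖(1:ℝ) - t‖ * ‖F x - F xbar‖ ≤ 1 * ‖F x - F xbar‖ :=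
              mul_le_mul_of_nonneg_right h1 (norm_nonneg _)
          _ = ‖F x - F xbar‖ := one_mul _
      exact hεsub i hi _ ⟨t, ht, lt_of_le_of_lt hdist (lt_of_lt_of_le hx (hεmle i hi))⟩
    have hPev : ∀ᶠ x in 𝓝 xbar, dist (F x) (F xbar) < εm := by
      have := (hc.continuous.tendsto xbar).eventually_mem (Metric.ball_mem_nhds (F xbar) hεmpos)
      exact this.mono fun x hx => mem_ball.1 hx
    -- the charts along the lifted path g
    have hgseg : ∀ i, i ≤ N → F (g (c i)) = γ xbar (c i) :=
      fun i hi => hLF xbar (c i) ⟨hcnonneg i, hcle1 i hi⟩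
    have hE : ∀ i : ℕ, ∃ e : OpenPartialHomeomorph E E,
        i < N → (g (c i) ∈ e.source ∧ (e : E → E) = F ∧ V (Y i) ⊆ e.target) := by
      intro i
      by_cases h : i < N
      · have hmem : F (g (c i)) ∈ V (Y i) := by
          rw [hgseg i h.le]
          exact hsegV i h (c i) ⟨le_rfl, hcmono i⟩
        obtain ⟨e, h1, h2, h3⟩ := hVchart (Y i) (g (c i)) hmem
        exact ⟨e, fun _ => ⟨h1, h2, h3⟩⟩
      · obtain ⟨e, h1, h2⟩ := hc (g (c i))
        exact ⟨e, fun h' => absurd h' h⟩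
    choose ch hch using hE
    -- the inductive claim
    have claim : ∀ i : ℕ, i < N →
        ∀ᶠ x in 𝓝 xbar, ∀ t ∈ Icc (c i) (c (i+1)), L x t = (ch i).symm (γ x t) := by
      intro i
      induction i with
      | zero =>
        intro h0N
        obtain ⟨hsrc, hcoe, htar⟩ := hch 0 h0N
        have hgxbar : g (c 0) = xbar := by rw [hc0]; exact hL0 xbar
        rw [hgxbar] at hsrc
        have hxsrc : ∀ᶠ x in 𝓝 xbar, x ∈ (ch 0).source :=
          (ch 0).open_source.eventually_mem hsrc
        filter_upwards [hPev, hxsrc] with x hP hx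
        have hmaps : ∀ t ∈ Icc (c 0) (c (0+1)), γ x t ∈ V (Y 0) := hγclose x hP 0 h0N
        have hstart : L x (c 0) = (ch 0).symm (γ x (c 0)) := by
          rw [hc0, hL0 x]
          have h1 : γ x 0 = (ch 0) x := by rw [hcoe, hγ0]
          rw [h1, (ch 0).left_inv hx]
        have huniq : EqOn (L x) (fun t => (ch 0).symm (γ x t)) (Icc (c 0) (c (0+1))) :=
          hc.unique isPreconnected_Icc
            ((hLc x).mono (hsegIcc 0 h0N))
            ((ch 0).continuousOn_symm.comp (hγcont x).continuousOn
              fun t ht => htar (hmaps t ht))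
            (by
              intro t ht
              rw [hLF x t (hsegIcc 0 h0N ht)]
              calc γ x t = (ch 0) ((ch 0).symm (γ x t)) :=
                    ((ch 0).right_inv (htar (hmaps t ht))).symm
                _ = F ((ch 0).symm (γ x t)) := by rw [hcoe])
            (left_mem_Icc.2 (hcmono 0)) hstart
        exact fun t ht => huniq ht
      | succ i ih =>
        intro hi1N
        have hiN : i < N := Nat.lt_of_succ_lt hi1N
        obtain ⟨hsrc, hcoe, htar⟩ := hch i hiN
        obtain ⟨hsrc', hcoe', htar'⟩ := hch (i+1) hi1N
        have hCi := ih hiN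
        -- g (c (i+1)) lies in both chart sources
        have hgt'e' : (ch (i+1)).symm (γ xbar (c (i+1))) = g (c (i+1)) := by
          have h1 : (ch (i+1)) (g (c (i+1))) = γ xbar (c (i+1)) := by
            rw [hcoe']
            exact hgseg (i+1) hi1N.le
          rw [← h1, (ch (i+1)).left_inv hsrc']
        have hγxbart' : γ xbar (c (i+1)) ∈ V (Y i) :=
          hsegV i hiN (c (i+1)) ⟨hcmono i, le_rfl⟩
        have hgt'e : g (c (i+1)) ∈ (ch i).source := by
          have h2 := hCi.self_of_nhds (c (i+1)) ⟨hcmono i, le_rfl⟩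
          have hγxbarself : γ xbar (c (i+1)) ∈ γ xbar '' univ := ⟨c (i+1), mem_univ _, rfl⟩
          have : L xbar (c (i+1)) = (ch i).symm (γ xbar (c (i+1))) := h2
          rw [hgdef, this]
          exact (ch i).map_target (htar hγxbart')
        -- the function u tends to g (c (i+1))
        have hu : Filter.Tendsto (fun x => (ch (i+1)).symm (γ x (c (i+1)))) (𝓝 xbar)
            (𝓝 (g (c (i+1)))) := by
          have h1 : γ xbar (c (i+1)) ∈ (ch (i+1)).target :=
            htar' (hsegV (i+1) hi1N (c (i+1)) ⟨le_rfl, hcmono (i+1)⟩)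
          have h2 : ContinuousAt ((ch (i+1)).symm) (γ xbar (c (i+1))) :=
            (ch (i+1)).symm.continuousAt (by rwa [OpenPartialHomeomorph.symm_source])
          have h3 := h2.tendsto.comp ((hγcontx (c (i+1))).tendsto xbar)
          rwa [hgt'e'] at h3
        have husrc : ∀ᶠ x in 𝓝 xbar, (ch (i+1)).symm (γ x (c (i+1))) ∈ (ch i).source :=
          hu.eventually_mem ((ch i).open_source.eventually_mem hgt'e)
        filter_upwards [hPev, hCi, husrc] with x hP hCix hux
        have hmaps : ∀ t ∈ Icc (c (i+1)) (c (i+2)), γ x t ∈ V (Y (i+1)) :=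
          hγclose x hP (i+1) hi1N
        -- junction : the two chart-inverses agree at c (i+1)
        have hjunction : L x (c (i+1)) = (ch (i+1)).symm (γ x (c (i+1))) := by
          have h1 : L x (c (i+1)) = (ch i).symm (γ x (c (i+1))) :=
            hCix (c (i+1)) ⟨hcmono i, le_rfl⟩
          have hγxt'Vi : γ x (c (i+1)) ∈ V (Y i) :=
            hγclose x hP i hiN (c (i+1)) ⟨hcmono i, le_rfl⟩
          have hγxt'Vi1 : γ x (c (i+1)) ∈ V (Y (i+1)) :=
            hγclose x hP (i+1) hi1N (c (i+1)) ⟨le_rfl, hcmono (i+1)⟩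
          have hmem1 : (ch i).symm (γ x (c (i+1))) ∈ (ch i).source :=
            (ch i).map_target (htar hγxt'Vi)
          have heq : (ch i) ((ch i).symm (γ x (c (i+1)))) =
              (ch i) ((ch (i+1)).symm (γ x (c (i+1)))) := by
            rw [(ch i).right_inv (htar hγxt'Vi)]
            calc γ x (c (i+1)) = (ch (i+1)) ((ch (i+1)).symm (γ x (c (i+1)))) :=
                  ((ch (i+1)).right_inv (htar' hγxt'Vi1)).symm
              _ = F ((ch (i+1)).symm (γ x (c (i+1)))) := by rw [hcoe']
              _ = (ch i) ((ch (i+1)).symm (γ x (c (i+1)))) := by rw [hcoe]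
          rw [h1, (ch i).injOn hmem1 hux heq]
        have huniq : EqOn (L x) (fun t => (ch (i+1)).symm (γ x t))
            (Icc (c (i+1)) (c (i+1+1))) :=
          hc.unique isPreconnected_Icc
            ((hLc x).mono (hsegIcc (i+1) hi1N))
            (((ch (i+1)).continuousOn_symm.comp (hγcont x).continuousOn
              fun t ht => htar' (hmaps t ht)))
            (by
              intro t ht
              rw [hLF x t (hsegIcc (i+1) hi1N ht)]
              calc γ x t = (ch (i+1)) ((ch (i+1)).symm (γ x t)) :=
                    ((ch (i+1)).right_inv (htar' (hmaps t ht))).symm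
                _ = F ((ch (i+1)).symm (γ x t)) := by rw [hcoe'])
            (left_mem_Icc.2 (hcmono (i+1))) hjunction
        exact fun t ht => huniq ht
    -- conclude : φ is eventually constant near xbar
    have hN1 : N - 1 < N := Nat.sub_lt hNpos one_pos
    have hsucc : N - 1 + 1 = N := Nat.succ_pred_eq_of_pos hNpos
    have hlast := claim (N-1) hN1
    have hone : (1:ℝ) ∈ Icc (c (N-1)) (c (N-1+1)) := by
      constructor
      · exact hcle1 (N-1) hN1.le
      · rw [hsucc, hcN]
    have hφconst : ∀ x, (∀ t ∈ Icc (c (N-1)) (c (N-1+1)), L x t = (ch (N-1)).symm (γ x t)) →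
        φ x = (ch (N-1)).symm (F b) := by
      intro x hx
      have := hx 1 hone
      rw [hγ1] at this
      exact this
    filter_upwards [hlast] with x hx
    rw [hφconst x hx, hφconst xbar (hlast.self_of_nhds)]
  -- φ is locally constant, hence constant; evaluate at a and b
  have hconst : φ a = φ b := by
    set S : Set E := {x | φ x = φ b} with hS
    have hSopen : IsOpen S := by
      rw [isOpen_iff_mem_nhds]
      intro x hx
      exact (hLC x).mono fun x' hx' => show φ x' = φ b by rw [hx']; exact hx
    have hScopen : IsOpen Sᶜ := by
      rw [isOpen_iff_mem_nhds]
      intro x hx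
      exact (hLC x).mono fun x' hx' hmem => hx (hx'.symm.trans hmem)
    have hSuniv : S = univ := IsClopen.eq_univ ⟨⟨hScopen⟩, hSopen⟩ ⟨b, rfl⟩
    have : a ∈ S := hSuniv ▸ mem_univ a
    exact this
  calc a = φ a := (hφ_fixed a hab).symm
    _ = φ b := hconst
    _ = b := hφ_fixed b rfl

theorem HadCharts.surjective (hc : HadCharts F)
    (hprop : ∀ s : Set E, Bornology.IsBounded s → Bornology.IsBounded (F ⁻¹' s)) :
    Function.Surjective F := by
  haveI : PreconnectedSpace E :=
    ⟨by simpa using (convex_univ : Convex ℝ (univ : Set E)).isPreconnected⟩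
  have hopen : IsOpen (range F) := by
    have hlh : IsLocalHomeomorph F := by
      apply IsLocalHomeomorph.mk
      intro x
      obtain ⟨e, hx, hcoe⟩ := hc x
      exact ⟨e, hx, fun z _ => (congrFun hcoe z).symm⟩
    exact hlh.isOpenMap.isOpen_range
  have hclosed : IsClosed (range F) := by
    rw [← closure_subset_iff_isClosed]
    intro y hy
    obtain ⟨V, hVopen, hVmem, hVchart⟩ := hc.ec hprop y
    obtain ⟨z, hzV, x, rfl⟩ := mem_closure_iff.1 hy V hVopen hVmem
    obtain ⟨e, hxe, hcoe, htar⟩ := hVchart x hzV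
    refine ⟨e.symm y, ?_⟩
    have hyt : y ∈ e.target := htar hVmem
    calc F (e.symm y) = e (e.symm y) := by rw [hcoe]
      _ = y := e.right_inv hyt
  intro y
  have huniv : range F = univ :=
    IsClopen.eq_univ ⟨hclosed, hopen⟩ ⟨F y, mem_range_self y⟩
  have : y ∈ range F := huniv ▸ mem_univ y
  exact this

end

noncomputable section

open Set Filter Metric Topology

/-- **Hadamard's global inverse function theorem.** Let `n ≥ 1` and let
`F : ℝⁿ → ℝⁿ` be continuously differentiable with everywhere invertible
derivative (equivalently, nonvanishing Jacobian determinant), and such that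
`‖F(x)‖ → ∞` as `‖x‖ → ∞`. Then `F` is a `C¹`-diffeomorphism of `ℝⁿ`:
`F` is bijective and its inverse is continuously differentiable. -/
theorem stmt_11 (n : ℕ) (hn : 1 ≤ n) (F : EuclideanSpace ℝ (Fin n) → EuclideanSpace ℝ (Fin n))
    (hF : ContDiff ℝ 1 F)
    (hdet : ∀ x : EuclideanSpace ℝ (Fin n), (fderiv ℝ F x).det ≠ 0)
    (hproper : Filter.Tendsto (fun x : EuclideanSpace ℝ (Fin n) => ‖F x‖)
      (Filter.comap (fun x : EuclideanSpace ℝ (Fin n) => ‖x‖) Filter.atTop) Filter.atTop) :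
    Function.Bijective F ∧ ContDiff ℝ 1 (Function.invFun F) := by
  classical
  -- derivative data
  have hdiff : ∀ x : EuclideanSpace ℝ (Fin n), HasFDerivAt F
      (((fderiv ℝ F x).toContinuousLinearEquivOfDetNeZero (hdet x) :
        EuclideanSpace ℝ (Fin n) ≃L[ℝ] EuclideanSpace ℝ (Fin n)) : EuclideanSpace ℝ (Fin n) →L[ℝ] EuclideanSpace ℝ (Fin n)) x := by
    intro x
    have h := (hF.differentiable one_ne_zero x).hasFDerivAt
    rwa [← ContinuousLinearMap.coe_toContinuousLinearEquivOfDetNeZero (fderiv ℝ F x) (hdet x)]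
      at h
  -- charts
  have hc : HadCharts F := by
    intro x
    refine ⟨hF.contDiffAt.toOpenPartialHomeomorph F (hdiff x) one_ne_zero, ?_, ?_⟩
    · exact hF.contDiffAt.mem_toOpenPartialHomeomorph_source (hdiff x) one_ne_zero
    · exact hF.contDiffAt.toOpenPartialHomeomorph_coe (hdiff x) one_ne_zero
  -- properness
  have hprop : ∀ s : Set (EuclideanSpace ℝ (Fin n)), Bornology.IsBounded s → Bornology.IsBounded (F ⁻¹' s) := by
    intro s hs
    obtain ⟨M, hM⟩ := (Metric.isBounded_iff_subset_closedBall (0:EuclideanSpace ℝ (Fin n))).1 hs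
    have hev : ∀ᶠ a in atTop, ∀ x : EuclideanSpace ℝ (Fin n), ‖x‖ = a → M + 1 ≤ ‖F x‖ := by
      rw [← Filter.eventually_comap]
      exact hproper.eventually (eventually_ge_atTop (M+1))
    obtain ⟨R, hR⟩ := eventually_atTop.1 hev
    rw [Metric.isBounded_iff_subset_closedBall (0:EuclideanSpace ℝ (Fin n))]
    refine ⟨max R 0, fun x hx => ?_⟩
    rw [mem_closedBall_zero_iff]
    by_contra h
    push_neg at h
    have h1 : R ≤ ‖x‖ := le_trans (le_max_left R 0) h.le
    have h2 : M + 1 ≤ ‖F x‖ := hR ‖x‖ h1 x rfl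
    have h3 : ‖F x‖ ≤ M := mem_closedBall_zero_iff.1 (hM hx)
    linarith
  have hinj : Function.Injective F := hc.injective hprop
  have hsurj : Function.Surjective F := hc.surjective hprop
  refine ⟨⟨hinj, hsurj⟩, ?_⟩
  rw [contDiff_iff_contDiffAt]
  intro y
  obtain ⟨a, rfl⟩ := hsurj y
  have hloc : ContDiffAt ℝ 1 (hF.contDiffAt.localInverse (hdiff a) one_ne_zero) (F a) :=
    ContDiffAt.to_localInverse hF.contDiffAt (hdiff a) one_ne_zero
  apply hloc.congr_of_eventuallyEq
  set e := hF.contDiffAt.toOpenPartialHomeomorph F (hdiff a) one_ne_zero with hedef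
  have hcoe : (e : EuclideanSpace ℝ (Fin n) → EuclideanSpace ℝ (Fin n)) = F := hF.contDiffAt.toOpenPartialHomeomorph_coe (hdiff a) one_ne_zero
  have htmem : F a ∈ e.target :=
    hF.contDiffAt.image_mem_toOpenPartialHomeomorph_target (hdiff a) one_ne_zero
  have hlocal : hF.contDiffAt.localInverse (hdiff a) one_ne_zero = e.symm := rfl
  rw [hlocal]
  filter_upwards [e.open_target.eventually_mem htmem] with z hz
  have h1 : F (e.symm z) = z := by
    calc F (e.symm z) = e (e.symm z) := by rw [hcoe]
      _ = z := e.right_inv hz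
  calc Function.invFun F z = Function.invFun F (F (e.symm z)) := by rw [h1]
    _ = e.symm z := Function.leftInverse_invFun hinj _
end
end
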